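/- Let Δ be a 2-dimensional Cohen–Macaulay simplicial complex on n vertices with CM-connectivity sequence (q_0,q_1,q_2), and suppose q_2 = 1 and q_1 ≥ 4. Then the number of 2-dimensional faces satisfies f_2(Δ) ≥ (n(q_1−2)+2)/2. -/
import Mathlib


open scoped Classical

namespace MultConj

variable {n : ℕ}

/-- `K` is (the set of faces of) an abstract simplicial complex on the
vertex set `Fin n`: it contains the empty face and is closed under subsets. -/
def IsComplex (K : Finset (Finset (Fin n))) : Prop :=
  ∅ ∈ K ∧ ∀ F ∈ K, ∀ G ⊆ F, G ∈ K

/-- The induced subcomplex `Δ_W` on a vertex set `W`. -/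
def induced (K : Finset (Finset (Fin n))) (W : Finset (Fin n)) :
    Finset (Finset (Fin n)) :=
  K.filter fun F => F ⊆ W

/-- The link of a face `F`. -/
def link (K : Finset (Finset (Fin n))) (F : Finset (Fin n)) :
    Finset (Finset (Fin n)) :=
  K.filter fun G => F ∩ G = ∅ ∧ F ∪ G ∈ K

/-- The `i`-skeleton: all faces of dimension at most `i`,
i.e. with at most `i+1` vertices. -/
def skel (K : Finset (Finset (Fin n))) (i : ℕ) : Finset (Finset (Fin n)) :=
  K.filter fun F => F.card ≤ i + 1

/-- The number of faces with `j` vertices, i.e. `f_{j-1}(K)`. -/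
def fcount (K : Finset (Finset (Fin n))) (j : ℕ) : ℕ :=
  (K.filter fun F => F.card = j).card

/-- The dimension of `K`, as an integer. -/
noncomputable def dimOf (K : Finset (Finset (Fin n))) : ℤ :=
  ((K.sup fun F => F.card : ℕ) : ℤ) - 1

variable (k : Type) [Field k]

/-- Simplicial chains supported on the faces of `K` having `j` vertices
(that is, `(j-1)`-dimensional chains), with coefficients in `k`. -/
abbrev chain (K : Finset (Finset (Fin n))) (j : ℕ) : Type :=
  {F : Finset (Fin n) // F ∈ K ∧ F.card = j} → k

/-- The simplicial boundary operator (with the standard orientation coming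
from the linear order on the vertices), viewed as landing in the space of
all functions on finsets. -/
noncomputable def bdry (K : Finset (Finset (Fin n))) (j : ℕ)
    (c : chain k K j) : Finset (Fin n) → k :=
  fun G => ∑ v : Fin n,
    if h : v ∉ G ∧ insert v G ∈ K ∧ (insert v G).card = j then
      (-1 : k) ^ (G.filter fun w => w < v).card * c ⟨insert v G, h.2⟩
    else 0

/-- Extension of a chain by zero to a function on all finsets. -/
def ext (K : Finset (Finset (Fin n))) (j : ℕ) (c : chain k K j) :
    Finset (Fin n) → k :=
  fun F => if h : F ∈ K ∧ F.card = j then c ⟨F, h⟩ else 0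

/-- `H̃_p(K; k) ≠ 0`: there is a reduced `p`-cycle which is not a boundary.
(For `p ≤ -2` this is false, as there is no `j : ℕ` with `j = p + 1`.) -/
def homNonzero (K : Finset (Finset (Fin n))) (p : ℤ) : Prop :=
  ∃ j : ℕ, (j : ℤ) = p + 1 ∧
    ∃ c : chain k K j, bdry k K j c = 0 ∧
      ∀ b : chain k K (j + 1), bdry k K (j + 1) b ≠ ext k K j c

/-- `H̃_p(K; k) ≅ k`: there is a reduced `p`-cycle `z` which is not a
boundary, and modulo boundaries every `p`-cycle is a multiple of `z`. -/
def homIsK (K : Finset (Finset (Fin n))) (p : ℤ) : Prop :=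
  ∃ j : ℕ, (j : ℤ) = p + 1 ∧
    ∃ z : chain k K j, bdry k K j z = 0 ∧
      (∀ b : chain k K (j + 1), bdry k K (j + 1) b ≠ ext k K j z) ∧
      ∀ c : chain k K j, bdry k K j c = 0 →
        ∃ a : k, ∃ b : chain k K (j + 1),
          bdry k K (j + 1) b = ext k K j (c - a • z)

/-- Cohen–Macaulayness of `K` over `k`, via Reisner's criterion:
`H̃_i(lk F; k) = 0` for every face `F` and every `i < dim K - |F|`. -/
def IsCM (K : Finset (Finset (Fin n))) : Prop :=
  ∀ F ∈ K, ∀ i : ℤ, i < dimOf K - F.card → ¬ homNonzero k (link K F) i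

/-- `K` is `q`-Cohen–Macaulay over `k`: removing any at most `q - 1`
vertices leaves a Cohen–Macaulay complex of the same dimension. -/
def IsQCM (q : ℕ) (K : Finset (Finset (Fin n))) : Prop :=
  ∀ U : Finset (Fin n), U.card ≤ q - 1 →
    IsCM k (induced K Uᶜ) ∧ dimOf (induced K Uᶜ) = dimOf K

/-- `q(K)`: the largest `q` for which `K` is `q`-CM over `k`. -/
noncomputable def qConn (K : Finset (Finset (Fin n))) : ℕ :=
  sSup {q : ℕ | IsQCM k q K}

/-- The CM-connectivity sequence: `q_i = q(Skel_i K)`. -/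
noncomputable def qSeq (K : Finset (Finset (Fin n))) (i : ℕ) : ℕ :=
  qConn k (skel K i)

/-- The minimal shifts `m_i` in the minimal free resolution of the face ring,
via Hochster's formula. -/
noncomputable def mshift (K : Finset (Finset (Fin n))) (i : ℕ) : ℕ :=
  sInf {m : ℕ | ∃ W : Finset (Fin n), W.card = m ∧
    homNonzero k (induced K W) ((W.card : ℤ) - i - 1)}

/-- The maximal shifts `M_i` in the minimal free resolution of the face ring,
via Hochster's formula. -/
noncomputable def Mshift (K : Finset (Finset (Fin n))) (i : ℕ) : ℕ :=
  sSup {m : ℕ | ∃ W : Finset (Fin n), W.card = m ∧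
    homNonzero k (induced K W) ((W.card : ℤ) - i - 1)}

/-- `K` is pure: every maximal face has cardinality `dim K + 1`. -/
def IsPure (K : Finset (Finset (Fin n))) : Prop :=
  ∀ F ∈ K, (∀ G ∈ K, F ⊆ G → G = F) → (F.card : ℤ) = dimOf K + 1

/-- `K` is connected: any two vertices are joined by a path of edges. -/
def Connected (K : Finset (Finset (Fin n))) : Prop :=
  ∀ u v : Fin n, {u} ∈ K → {v} ∈ K →
    Relation.ReflTransGen (fun a b => ({a, b} : Finset (Fin n)) ∈ K) u v

/-- `K` is Gorenstein* over `k`; by Stanley's topological characterization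
this means that `K` is a `k`-homology sphere: for every face `F` the link of
`F` has vanishing reduced homology below dimension `dim K - |F|` and reduced
homology isomorphic to `k` in dimension `dim K - |F|`. -/
def IsGorensteinStar (K : Finset (Finset (Fin n))) : Prop :=
  IsComplex K ∧
  (∀ F ∈ K, ∀ i : ℤ, i < dimOf K - F.card → ¬ homNonzero k (link K F) i) ∧
  (∀ F ∈ K, homIsK k (link K F) (dimOf K - F.card))


lemma link_empty (K : Finset (Finset (Fin n))) : link K ∅ = K := by
  unfold link
  rw [Finset.filter_true_of_mem]
  intro G hG
  exact ⟨Finset.empty_inter G, by rwa [Finset.empty_union]⟩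

noncomputable def bdryL (K : Finset (Finset (Fin n))) (j : ℕ) :
    chain k K j →ₗ[k] (Finset (Fin n) → k) where
  toFun := bdry k K j
  map_add' c c' := by
    funext G
    simp only [bdry, Pi.add_apply, ← Finset.sum_add_distrib]
    refine Finset.sum_congr rfl fun v _ => ?_
    split_ifs with h
    · ring
    · simp
  map_smul' a c := by
    funext G
    show bdry k K j (a • c) G = a * bdry k K j c G
    simp only [bdry, Pi.smul_apply, smul_eq_mul, Finset.mul_sum]
    refine Finset.sum_congr rfl fun v _ => ?_
    split_ifs with h
    · ring
    · simp

noncomputable def extL (K : Finset (Finset (Fin n))) (j : ℕ) :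
    chain k K j →ₗ[k] (Finset (Fin n) → k) where
  toFun := ext k K j
  map_add' c c' := by
    funext F
    simp only [ext, Pi.add_apply]
    split_ifs with h
    · simp
    · simp
  map_smul' a c := by
    funext F
    simp only [ext, RingHom.id_apply, Pi.smul_apply, smul_eq_mul]
    split_ifs with h
    · simp
    · simp

@[simp] lemma bdryL_apply (K : Finset (Finset (Fin n))) (j : ℕ) (c : chain k K j) :
    bdryL k K j c = bdry k K j c := rfl

@[simp] lemma extL_apply (K : Finset (Finset (Fin n))) (j : ℕ) (c : chain k K j) :
    extL k K j c = ext k K j c := rfl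

lemma ext_injective (K : Finset (Finset (Fin n))) (j : ℕ) :
    Function.Injective (ext k K j) := by
  intro c c' h
  funext F
  have := congrFun h F.1
  simpa [ext, dif_pos F.2] using this

lemma bdry_supp {K : Finset (Finset (Fin n))} (hK : IsComplex K) (j : ℕ)
    (c : chain k K (j + 1)) (F : Finset (Fin n)) (h : ¬(F ∈ K ∧ F.card = j)) :
    bdry k K (j + 1) c F = 0 := by
  apply Finset.sum_eq_zero
  intro v _
  rw [dif_neg]
  rintro ⟨hv, hins, hcard⟩
  rw [Finset.card_insert_of_notMem hv] at hcard
  exact h ⟨hK.2 _ hins _ (Finset.subset_insert _ _), by omega⟩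

/-- The summand in the expansion of `∂ ∘ ∂`. -/
noncomputable def dterm (K : Finset (Finset (Fin n))) (j : ℕ) (b : chain k K (j + 1))
    (G : Finset (Fin n)) (v w : Fin n) : k :=
  if h : (v ∉ G ∧ w ∉ G ∧ v ≠ w ∧ insert v G ∈ K ∧ (insert v G).card = j) ∧
      (insert w (insert v G) ∈ K ∧ (insert w (insert v G)).card = j + 1) then
    (-1 : k) ^ (G.filter fun x => x < v).card *
      ((-1 : k) ^ ((insert v G).filter fun x => x < w).card * b ⟨insert w (insert v G), h.2⟩)
  else 0

lemma dterm_cond_symm {K : Finset (Finset (Fin n))} (hK : IsComplex K) {j : ℕ}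
    {G : Finset (Fin n)} {v w : Fin n}
    (h : (v ∉ G ∧ w ∉ G ∧ v ≠ w ∧ insert v G ∈ K ∧ (insert v G).card = j) ∧
      (insert w (insert v G) ∈ K ∧ (insert w (insert v G)).card = j + 1)) :
    (w ∉ G ∧ v ∉ G ∧ w ≠ v ∧ insert w G ∈ K ∧ (insert w G).card = j) ∧
      (insert v (insert w G) ∈ K ∧ (insert v (insert w G)).card = j + 1) := by
  obtain ⟨⟨hv, hw, hvw, hmem, hcard⟩, hmem2, hcard2⟩ := h
  have hcomm : insert v (insert w G) = insert w (insert v G) := Finset.insert_comm v w G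
  have hsub : insert w G ⊆ insert w (insert v G) :=
    Finset.insert_subset_insert w (Finset.subset_insert v G)
  have hGc : G.card + 1 = j := by rw [← Finset.card_insert_of_notMem hv]; exact hcard
  refine ⟨⟨hw, hv, hvw.symm, hK.2 _ hmem2 _ hsub, ?_⟩, by rwa [hcomm], by rwa [hcomm]⟩
  rw [Finset.card_insert_of_notMem hw]
  exact hGc

lemma filter_lt_insert_card {G : Finset (Fin n)} {v : Fin n} (hv : v ∉ G) (w : Fin n) :
    (((insert v G).filter fun x => x < w).card : ℤ) =
      ((G.filter fun x => x < w).card : ℤ) + (if v < w then 1 else 0) := by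
  rw [Finset.filter_insert]
  split_ifs with h
  · rw [Finset.card_insert_of_notMem (fun hc => hv (Finset.mem_filter.1 hc).1)]
    push_cast; ring
  · simp

lemma dterm_skew {K : Finset (Finset (Fin n))} (hK : IsComplex K) (j : ℕ)
    (b : chain k K (j + 1)) (G : Finset (Fin n)) (v w : Fin n) :
    dterm k K j b G v w + dterm k K j b G w v = 0 := by
  by_cases h : (v ∉ G ∧ w ∉ G ∧ v ≠ w ∧ insert v G ∈ K ∧ (insert v G).card = j) ∧
      (insert w (insert v G) ∈ K ∧ (insert w (insert v G)).card = j + 1)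
  · have h' := dterm_cond_symm hK h
    rw [dterm, dif_pos h, dterm, dif_pos h']
    have hv := h.1.1
    have hw := h.1.2.1
    have hvw := h.1.2.2.1
    have hcomm : insert v (insert w G) = insert w (insert v G) := Finset.insert_comm v w G
    have hb : b ⟨insert v (insert w G), h'.2⟩ = b ⟨insert w (insert v G), h.2⟩ :=
      congrArg b (Subtype.ext hcomm)
    rw [hb]
    have h1 := filter_lt_insert_card (n := n) hv w
    have h2 := filter_lt_insert_card (n := n) hw v
    rcases hvw.lt_or_gt with hlt | hlt
    · rw [if_pos hlt] at h1
      rw [if_neg (not_lt.2 hlt.le)] at h2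
      have e1 : ((insert v G).filter fun x => x < w).card
          = (G.filter fun x => x < w).card + 1 := by exact_mod_cast h1
      have e2 : ((insert w G).filter fun x => x < v).card
          = (G.filter fun x => x < v).card := by exact_mod_cast h2
      rw [e1, e2, pow_succ]
      ring
    · rw [if_neg (not_lt.2 hlt.le)] at h1
      rw [if_pos hlt] at h2
      have e1 : ((insert v G).filter fun x => x < w).card
          = (G.filter fun x => x < w).card := by exact_mod_cast h1
      have e2 : ((insert w G).filter fun x => x < v).card
          = (G.filter fun x => x < v).card + 1 := by exact_mod_cast h2
      rw [e1, e2, pow_succ]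
      ring
  · have h' : ¬ ((w ∉ G ∧ v ∉ G ∧ w ≠ v ∧ insert w G ∈ K ∧ (insert w G).card = j) ∧
        (insert v (insert w G) ∈ K ∧ (insert v (insert w G)).card = j + 1)) :=
      fun hc => h (dterm_cond_symm hK hc)
    rw [dterm, dif_neg h, dterm, dif_neg h', add_zero]

lemma bdry_bdry {K : Finset (Finset (Fin n))} (hK : IsComplex K) (j : ℕ)
    (b : chain k K (j + 1)) :
    bdry k K j (fun F => bdry k K (j + 1) b F.1) = 0 := by
  funext G
  have step : ∀ v : Fin n,
      (if h : v ∉ G ∧ insert v G ∈ K ∧ (insert v G).card = j then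
        (-1 : k) ^ (G.filter fun x => x < v).card * bdry k K (j + 1) b (insert v G)
      else 0) = ∑ w : Fin n, dterm k K j b G v w := by
    intro v
    by_cases h1 : v ∉ G ∧ insert v G ∈ K ∧ (insert v G).card = j
    · rw [dif_pos h1, bdry, Finset.mul_sum]
      refine Finset.sum_congr rfl fun w _ => ?_
      by_cases h2 : w ∉ insert v G ∧ insert w (insert v G) ∈ K ∧ (insert w (insert v G)).card = j + 1
      · have hw : w ∉ G := fun hc => h2.1 (Finset.mem_insert_of_mem hc)
        have hvw : v ≠ w := fun hc => h2.1 (hc ▸ Finset.mem_insert_self v G)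
        rw [dif_pos h2, dterm, dif_pos ⟨⟨h1.1, hw, hvw, h1.2.1, h1.2.2⟩, h2.2⟩]
      · rw [dif_neg h2, mul_zero, dterm, dif_neg]
        rintro ⟨⟨-, hw, hvw, -, -⟩, hm, hc⟩
        exact h2 ⟨by simp [Finset.mem_insert, hvw.symm, hw], hm, hc⟩
    · rw [dif_neg h1]
      symm
      apply Finset.sum_eq_zero
      intro w _
      rw [dterm, dif_neg]
      rintro ⟨⟨hv, -, -, hm, hc⟩, -⟩
      exact h1 ⟨hv, hm, hc⟩
  have key : (∑ v : Fin n, ∑ w : Fin n, dterm k K j b G v w) = 0 := by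
    rw [← Finset.sum_product' (s := Finset.univ) (t := Finset.univ)]
    refine Finset.sum_involution (fun p _ => (p.2, p.1)) ?_ ?_
      (fun p hp => Finset.mem_product.2 ⟨Finset.mem_univ _, Finset.mem_univ _⟩) ?_
    · intro p _
      exact dterm_skew k hK j b G p.1 p.2
    · intro p _ hne hc
      apply hne
      have hpp : p.2 = p.1 := congrArg Prod.fst hc
      rw [dterm, dif_neg]
      rintro ⟨⟨-, -, hvw, -, -⟩, -⟩
      exact hvw hpp.symm
    · intro p _
      rfl
  calc bdry k K j (fun F => bdry k K (j + 1) b F.1) G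
      = ∑ v : Fin n, ∑ w : Fin n, dterm k K j b G v w :=
        Finset.sum_congr rfl (fun v _ => step v)
    _ = 0 := key

lemma bdry_zero (K : Finset (Finset (Fin n))) (c : chain k K 0) :
    bdry k K 0 c = 0 := by
  funext G
  apply Finset.sum_eq_zero
  intro v _
  rw [dif_neg]
  rintro ⟨hv, -, hcard⟩
  rw [Finset.card_insert_of_notMem hv] at hcard
  omega

lemma range_bdry {K : Finset (Finset (Fin n))} (hK : IsComplex K) (j : ℕ)
    (hvan : ∀ c : chain k K j, bdry k K j c = 0 →
      ∃ b : chain k K (j + 1), bdry k K (j + 1) b = ext k K j c) :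
    LinearMap.range (bdryL k K (j + 1)) =
      (LinearMap.ker (bdryL k K j)).map (extL k K j) := by
  apply le_antisymm
  · rintro x ⟨b, rfl⟩
    refine ⟨fun F => bdry k K (j + 1) b F.1, ?_, ?_⟩
    · exact bdry_bdry k hK j b
    · show ext k K j (fun F => bdry k K (j + 1) b F.1) = bdry k K (j + 1) b
      funext F
      by_cases h : F ∈ K ∧ F.card = j
      · rw [ext, dif_pos h]
      · rw [ext, dif_neg h]
        exact (bdry_supp k hK j b F h).symm
  · rintro x ⟨c, hc, rfl⟩
    obtain ⟨b, hb⟩ := hvan c hc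
    exact ⟨b, hb⟩

lemma finrank_chain (K : Finset (Finset (Fin n))) (j : ℕ) :
    Module.finrank k (chain k K j) = fcount K j := by
  rw [Module.finrank_pi, Fintype.card_subtype]
  unfold fcount
  congr 1
  ext F
  simp

/-- The Euler-characteristic inequality `f₁ + 1 ≤ f₂ + n` for a
2-dimensional CM complex. -/
lemma euler_ineq {K : Finset (Finset (Fin n))} (hK : IsComplex K)
    (hv : ∀ v : Fin n, {v} ∈ K) (hdim : dimOf K = 2) (hCM : IsCM k K) :
    fcount K 2 + 1 ≤ fcount K 3 + n := by
  have hvan : ∀ j : ℕ, j ≤ 2 → ∀ c : chain k K j, bdry k K j c = 0 →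
      ∃ b : chain k K (j + 1), bdry k K (j + 1) b = ext k K j c := by
    intro j hj c hc
    have h := hCM ∅ hK.1 ((j : ℤ) - 1) (by
      rw [hdim, Finset.card_empty]
      omega)
    rw [link_empty] at h
    unfold homNonzero at h
    push_neg at h
    exact h j (by push_cast; ring) c hc
  have hrank : ∀ j : ℕ, j ≤ 2 →
      Module.finrank k (LinearMap.range (bdryL k K (j + 1))) =
        Module.finrank k (LinearMap.ker (bdryL k K j)) := by
    intro j hj
    rw [range_bdry k hK j (hvan j hj)]
    exact (LinearEquiv.finrank_eq (Submodule.equivMapOfInjective (extL k K j)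
      (ext_injective k K j) (LinearMap.ker (bdryL k K j)))).symm
  have hrn : ∀ j : ℕ,
      Module.finrank k (LinearMap.range (bdryL k K j)) +
        Module.finrank k (LinearMap.ker (bdryL k K j)) = fcount K j := by
    intro j
    rw [← finrank_chain k K j]
    exact LinearMap.finrank_range_add_finrank_ker (bdryL k K j)
  have hker0 : LinearMap.ker (bdryL k K 0) = ⊤ := by
    rw [eq_top_iff]
    intro c _
    exact bdry_zero k K c
  have hf0 : fcount K 0 = 1 := by
    unfold fcount
    have : K.filter (fun F => F.card = 0) = {∅} := by
      ext F
      simp only [Finset.mem_filter, Finset.card_eq_zero, Finset.mem_singleton]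
      exact ⟨fun h => h.2, fun h => ⟨h ▸ hK.1, h⟩⟩
    rw [this, Finset.card_singleton]
  have hf1 : fcount K 1 = n := by
    unfold fcount
    have : K.filter (fun F => F.card = 1) =
        Finset.univ.image (fun v : Fin n => ({v} : Finset (Fin n))) := by
      ext F
      simp only [Finset.mem_filter, Finset.card_eq_one, Finset.mem_image,
        Finset.mem_univ, true_and]
      constructor
      · rintro ⟨-, a, rfl⟩
        exact ⟨a, rfl⟩
      · rintro ⟨a, rfl⟩
        exact ⟨hv a, a, rfl⟩
    rw [this, Finset.card_image_of_injective _ Finset.singleton_injective,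
      Finset.card_univ, Fintype.card_fin]
  have hk0 : Module.finrank k (LinearMap.ker (bdryL k K 0)) = 1 := by
    rw [hker0]
    rw [finrank_top, finrank_chain k K 0, hf0]
  have hr1 : Module.finrank k (LinearMap.range (bdryL k K 1)) =
      Module.finrank k (LinearMap.ker (bdryL k K 0)) := hrank 0 (by omega)
  have hr2 : Module.finrank k (LinearMap.range (bdryL k K 2)) =
      Module.finrank k (LinearMap.ker (bdryL k K 1)) := hrank 1 (by omega)
  have hr3 : Module.finrank k (LinearMap.range (bdryL k K 3)) =
      Module.finrank k (LinearMap.ker (bdryL k K 2)) := hrank 2 (by omega)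
  have h1 := hrn 1
  have h2 := hrn 2
  have h3 := hrn 3
  have hle : Module.finrank k (LinearMap.range (bdryL k K 3)) ≤ fcount K 3 := by
    rw [← finrank_chain k K 3]
    exact (bdryL k K 3).finrank_range_le
  rw [hf1] at h1
  omega


lemma dim_skel1 {K : Finset (Finset (Fin n))} (hK : IsComplex K)
    (hdim : dimOf K = 2) : dimOf (skel K 1) = 1 := by
  unfold dimOf at hdim ⊢
  have hsup : (K.sup fun F => F.card) = 3 := by omega
  obtain ⟨F, hF, hFs⟩ := Finset.exists_mem_eq_sup K ⟨∅, hK.1⟩ (fun F => F.card)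
  have hcard : F.card = 3 := by omega
  obtain ⟨G, hGF, hG2⟩ := Finset.exists_subset_card_eq
    (show 2 ≤ F.card by omega)
  have hGm : G ∈ skel K 1 := Finset.mem_filter.2 ⟨hK.2 F hF G hGF, by omega⟩
  have h2 : ((skel K 1).sup fun F => F.card) = 2 := by
    apply le_antisymm
    · exact Finset.sup_le fun F hF => (Finset.mem_filter.1 hF).2
    · exact hG2 ▸ Finset.le_sup hGm
  rw [h2]
  norm_num

lemma qcm_self {K : Finset (Finset (Fin n))} (hK : IsComplex K)
    (hdim : dimOf K = 2) (hq1 : 4 ≤ qSeq k K 1) :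
    IsQCM k (qSeq k K 1) (skel K 1) := by
  have hd1 := dim_skel1 hK hdim
  have hbdd : BddAbove {q : ℕ | IsQCM k q (skel K 1)} := by
    refine ⟨n + 1, fun q' hq' => ?_⟩
    by_contra hgt
    push_neg at hgt
    obtain ⟨-, hd⟩ := hq' Finset.univ (by
      rw [Finset.card_univ, Fintype.card_fin]; omega)
    rw [hd1] at hd
    rw [Finset.compl_univ] at hd
    have hz : ∀ F ∈ induced (skel K 1) ∅, F.card = 0 := by
      intro F hF
      have := (Finset.mem_filter.1 hF).2
      simpa [Finset.card_eq_zero, Finset.subset_empty] using this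
    have : ((induced (skel K 1) ∅).sup fun F => F.card) = 0 := by
      apply Nat.le_antisymm _ (Nat.zero_le _)
      exact Finset.sup_le fun F hF => le_of_eq (hz F hF)
    unfold dimOf at hd
    omega
  have hne : {q : ℕ | IsQCM k q (skel K 1)}.Nonempty := by
    by_contra h
    rw [Set.not_nonempty_iff_eq_empty] at h
    have : qSeq k K 1 = 0 := by
      unfold qSeq qConn
      rw [h, csSup_empty]
      rfl
    omega
  exact Nat.sSup_mem hne hbdd

lemma degree_ge {K : Finset (Finset (Fin n))} (hK : IsComplex K)
    (hv : ∀ v : Fin n, {v} ∈ K) (hdim : dimOf K = 2) {q : ℕ} (hq : 1 ≤ q)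
    (hQ : IsQCM k q (skel K 1)) (v : Fin n) :
    q ≤ (K.filter fun F => F.card = 2 ∧ v ∈ F).card := by
  have hd1 := dim_skel1 hK hdim
  by_contra hlt
  push_neg at hlt
  set U : Finset (Fin n) :=
    Finset.univ.filter (fun w => w ≠ v ∧ ({v, w} : Finset (Fin n)) ∈ K) with hUdef
  have hUmem : ∀ w : Fin n, w ∈ U ↔ w ≠ v ∧ ({v, w} : Finset (Fin n)) ∈ K := by
    intro w
    simp [hUdef]
  have hUcard : U.card ≤ (K.filter fun F => F.card = 2 ∧ v ∈ F).card := by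
    apply Finset.card_le_card_of_injOn (fun w => ({v, w} : Finset (Fin n)))
    · intro w hw
      obtain ⟨hwv, hwK⟩ := (hUmem w).1 hw
      refine Finset.mem_filter.2 ⟨hwK, ?_, Finset.mem_insert_self v _⟩
      rw [Finset.card_insert_of_notMem
        (by rw [Finset.mem_singleton]; exact fun h => hwv h.symm),
        Finset.card_singleton]
    · intro w hw w' hw' h
      have h' : ({v, w} : Finset (Fin n)) = {v, w'} := h
      have : w ∈ ({v, w'} : Finset (Fin n)) :=
        h' ▸ Finset.mem_insert_of_mem (Finset.mem_singleton_self w)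
      rcases Finset.mem_insert.1 this with h1 | h1
      · exact absurd h1 ((hUmem w).1 hw).1
      · exact Finset.mem_singleton.1 h1
  obtain ⟨hCM', hdim'⟩ := hQ U (by omega)
  rw [hd1] at hdim'
  by_cases hw : ∃ w : Fin n, w ≠ v ∧ w ∉ U
  · obtain ⟨w, hwv, hwU⟩ := hw
    have hvU : v ∉ U := fun h => ((hUmem v).1 h).1 rfl
    have hvmem : ({v} : Finset (Fin n)) ∈ induced (skel K 1) Uᶜ := by
      refine Finset.mem_filter.2 ⟨Finset.mem_filter.2 ⟨hv v, by simp⟩, ?_⟩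
      simpa using hvU
    have hwmem : ({w} : Finset (Fin n)) ∈ induced (skel K 1) Uᶜ := by
      refine Finset.mem_filter.2 ⟨Finset.mem_filter.2 ⟨hv w, by simp⟩, ?_⟩
      simpa using hwU
    have hem : (∅ : Finset (Fin n)) ∈ induced (skel K 1) Uᶜ :=
      Finset.mem_filter.2 ⟨Finset.mem_filter.2 ⟨hK.1, by simp⟩, Finset.empty_subset _⟩
    set Δ := induced (skel K 1) Uᶜ with hΔ
    have h0 := hCM' ∅ hem 0 (by rw [hdim', Finset.card_empty]; norm_num)
    rw [link_empty] at h0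
    apply h0
    refine ⟨1, by norm_num,
      fun F => if (F : Finset (Fin n)) = {v} then 1
        else if (F : Finset (Fin n)) = {w} then -1 else 0, ?_, ?_⟩
    · funext G
      by_cases hG : G = (∅ : Finset (Fin n))
      · subst hG
        show (∑ u : Fin n, _) = (0 : k)
        have hterm : ∀ u : Fin n,
            (if h : u ∉ (∅ : Finset (Fin n)) ∧ insert u ∅ ∈ Δ ∧ (insert u (∅ : Finset (Fin n))).card = 1 then
              (-1 : k) ^ ((∅ : Finset (Fin n)).filter fun x => x < u).card *
                (if (insert u (∅ : Finset (Fin n))) = {v} then (1 : k)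
                  else if (insert u (∅ : Finset (Fin n))) = {w} then -1 else 0)
            else 0) =
            (if u = v then (1 : k) else 0) + (if u = w then (-1 : k) else 0) := by
          intro u
          have hins : insert u (∅ : Finset (Fin n)) = {u} := rfl
          by_cases h : u ∉ (∅ : Finset (Fin n)) ∧ insert u ∅ ∈ Δ ∧ (insert u (∅ : Finset (Fin n))).card = 1
          · rw [dif_pos h, Finset.filter_empty, Finset.card_empty, pow_zero, one_mul, hins]
            simp only [Finset.singleton_inj]
            split_ifs with h1 h2
            · exact absurd (h2.symm.trans h1) hwv
            · norm_num
            · norm_num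
            · norm_num
          · rw [dif_neg h]
            have huv : u ≠ v := by
              rintro rfl
              exact h ⟨Finset.notMem_empty u, by rwa [hins], by rw [hins]; exact Finset.card_singleton u⟩
            have huw : u ≠ w := by
              rintro rfl
              exact h ⟨Finset.notMem_empty u, by rwa [hins], by rw [hins]; exact Finset.card_singleton u⟩
            rw [if_neg huv, if_neg huw, add_zero]
        rw [Finset.sum_congr rfl fun u _ => hterm u, Finset.sum_add_distrib,
          Finset.sum_ite_eq' Finset.univ v (fun _ => (1 : k)),
          Finset.sum_ite_eq' Finset.univ w (fun _ => (-1 : k))]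
        simp
      · show (∑ u : Fin n, _) = (0 : k)
        apply Finset.sum_eq_zero
        intro u _
        rw [dif_neg]
        rintro ⟨hu, -, hcard⟩
        rw [Finset.card_insert_of_notMem hu] at hcard
        exact hG (Finset.card_eq_zero.1 (by omega))
    · intro b hb
      have h := congrFun hb {v}
      have hL : bdry k Δ 2 b {v} = 0 := by
        apply Finset.sum_eq_zero
        intro u _
        rw [dif_neg]
        rintro ⟨hu1, hu2, -⟩
        have husub : insert u ({v} : Finset (Fin n)) ⊆ Uᶜ := (Finset.mem_filter.1 hu2).2
        have huU : u ∉ U := by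
          have := husub (Finset.mem_insert_self u {v})
          simpa using this
        have huK : insert u ({v} : Finset (Fin n)) ∈ K :=
          (Finset.mem_filter.1 (Finset.mem_filter.1 hu2).1).1
        have huv : u ≠ v := fun hc => hu1 (hc ▸ Finset.mem_singleton_self u)
        apply huU
        rw [hUmem]
        refine ⟨huv, ?_⟩
        rwa [Finset.pair_comm]
      rw [hL] at h
      have hR : ext k Δ 1 (fun F => if (F : Finset (Fin n)) = {v} then (1 : k)
          else if (F : Finset (Fin n)) = {w} then -1 else 0) {v} = 1 := by
        rw [ext, dif_pos ⟨hvmem, Finset.card_singleton v⟩, if_pos rfl]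
      rw [hR] at h
      exact one_ne_zero h.symm
  · push_neg at hw
    have hsub : ∀ F ∈ induced (skel K 1) Uᶜ, F.card ≤ 1 := by
      intro F hF
      have hFs : F ⊆ Uᶜ := (Finset.mem_filter.1 hF).2
      have : F ⊆ {v} := by
        intro x hx
        have hxU : x ∉ U := by simpa using hFs hx
        rw [Finset.mem_singleton]
        by_contra hxv
        exact hxU (hw x hxv)
      calc F.card ≤ ({v} : Finset (Fin n)).card := Finset.card_le_card this
        _ = 1 := Finset.card_singleton v
    have hsup : ((induced (skel K 1) Uᶜ).sup fun F => F.card) ≤ 1 :=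
      Finset.sup_le hsub
    unfold dimOf at hdim'
    omega

lemma sum_degrees (K : Finset (Finset (Fin n))) :
    ∑ v : Fin n, (K.filter fun F => F.card = 2 ∧ v ∈ F).card = 2 * fcount K 2 := by
  have h1 : ∀ v : Fin n, (K.filter fun F => F.card = 2 ∧ v ∈ F).card =
      ∑ F ∈ K.filter (fun F => F.card = 2), if v ∈ F then 1 else 0 := by
    intro v
    rw [← Finset.card_filter, Finset.filter_filter]
  rw [Finset.sum_congr rfl fun v _ => h1 v, Finset.sum_comm]
  have h2 : ∀ F ∈ K.filter (fun F => F.card = 2),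
      (∑ v : Fin n, if v ∈ F then (1 : ℕ) else 0) = 2 := by
    intro F hF
    rw [← Finset.card_filter, Finset.filter_univ_mem]
    exact (Finset.mem_filter.1 hF).2
  rw [Finset.sum_congr rfl h2, Finset.sum_const, smul_eq_mul]
  unfold fcount
  ring

/-- Case 5 of the proof of Theorem 4.4: a 2-dimensional CM complex on `n`
vertices with `q_2 = 1` and `q_1 ≥ 4` has at least `(n(q_1 - 2) + 2)/2`
two-dimensional faces. -/
theorem two_dim_CM_face_bound
    (n : ℕ) (k : Type) [Field k] (K : Finset (Finset (Fin n)))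
    (hK : IsComplex K) (hv : ∀ v : Fin n, {v} ∈ K)
    (hdim : dimOf K = 2) (hCM : IsCM k K)
    (hq2 : qSeq k K 2 = 1) (hq1 : 4 ≤ qSeq k K 1) :
    ((n : ℚ) * ((qSeq k K 1 : ℚ) - 2) + 2) / 2 ≤ fcount K 3 := by
  have heuler := euler_ineq k hK hv hdim hCM
  have hQ := qcm_self k hK hdim hq1
  have hdeg : ∀ v : Fin n, qSeq k K 1 ≤ (K.filter fun F => F.card = 2 ∧ v ∈ F).card :=
    degree_ge k hK hv hdim (by omega) hQ
  have hsum : n * qSeq k K 1 ≤ 2 * fcount K 2 := by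
    calc n * qSeq k K 1 = Finset.univ.card • qSeq k K 1 := by
          rw [Finset.card_univ, Fintype.card_fin, smul_eq_mul]
      _ ≤ ∑ v : Fin n, (K.filter fun F => F.card = 2 ∧ v ∈ F).card :=
          Finset.card_nsmul_le_sum _ _ _ (fun v _ => hdeg v)
      _ = 2 * fcount K 2 := sum_degrees K
  have h1 : (fcount K 2 : ℚ) + 1 ≤ (fcount K 3 : ℚ) + n := by exact_mod_cast heuler
  have h2 : (n : ℚ) * (qSeq k K 1 : ℚ) ≤ 2 * (fcount K 2 : ℚ) := by exact_mod_cast hsum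
  linarith

end MultConj
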